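/- (Derivative of a quantum evolution machine.) Let H_1,…,H_J be Hermitian d×d matrices, let H(φ) = Σ_{j=1}^J φ_j H_j for φ ∈ ℝ^J, let ρ₀ be any d×d complex matrix, and define ρ(φ) = e^{−iH(φ)} ρ₀ e^{iH(φ)}. Then for each j ∈ {1,…,J}, the map φ_j ↦ ρ(φ) is differentiable and ∂_j ρ(φ) = i [ρ(φ), Ψ_φ(H_j)], where Ψ_φ(X) = ∫₀¹ e^{−iH(φ)t} X e^{iH(φ)t} dt (a Bochner integral of matrix-valued functions) and [X,Y] = XY − YX. -/

import Mathlib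

open Matrix MeasureTheory

noncomputable section

attribute [local instance] Matrix.linftyOpNormedAddCommGroup Matrix.linftyOpNormedSpace

/-- Square complex matrices of size `d`. -/
abbrev Mat (d : ℕ) := Matrix (Fin d) (Fin d) ℂ

/-- The Hamiltonian `H(φ) = Σ_{j=1}^J φ_j H_j` of a quantum evolution machine. -/
def qemHam {d : ℕ} (H : ℕ → Mat d) (J : ℕ) (φ : ℕ → ℝ) : Mat d :=
  ∑ j ∈ Finset.Icc 1 J, (φ j : ℂ) • H j

/-- The quantum evolution machine state `ρ(φ) = e^{−iH(φ)} ρ₀ e^{iH(φ)}`. -/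
def qemState {d : ℕ} (H : ℕ → Mat d) (J : ℕ) (ρ₀ : Mat d) (φ : ℕ → ℝ) : Mat d :=
  NormedSpace.exp ((-Complex.I) • qemHam H J φ) * ρ₀ *
    NormedSpace.exp (Complex.I • qemHam H J φ)

/-- The channel `Ψ_φ(X) = ∫₀¹ e^{−iH(φ)t} X e^{iH(φ)t} dt` (a Bochner integral). -/
def qemChan {d : ℕ} (H : ℕ → Mat d) (J : ℕ) (φ : ℕ → ℝ) (X : Mat d) : Mat d :=
  ∫ t in (0 : ℝ)..1,
    NormedSpace.exp ((-(Complex.I * (t : ℂ))) • qemHam H J φ) * X *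
      NormedSpace.exp ((Complex.I * (t : ℂ)) • qemHam H J φ)

/-!
Duhamel's formula `d/dx e^{A + xB} |_{x=0} = ∫₀¹ e^{sA} B e^{(1-s)A} ds` holds in any real Banach
algebra: the fundamental theorem of calculus for `s ↦ e^{sM} e^{(1-s)N}` gives
`e^M - e^N = ∫₀¹ e^{sM} (M - N) e^{(1-s)N} ds`, so the difference quotient of `x ↦ e^{A + xB}` is
an integral depending continuously on `x`. Splitting off `e^{∓iH}` from the Duhamel integrals of
`A = ∓iH(φ)` (after the substitution `s ↦ 1 - s` in the second) shows that `∂_j e^{-iH(φ)}` is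
`-i Ψ_φ(H_j) e^{-iH(φ)}` and `∂_j e^{iH(φ)}` is `i e^{iH(φ)} Ψ_φ(H_j)`; the product rule then
gives `i [ρ(φ), Ψ_φ(H_j)]`.
-/

open NormedSpace intervalIntegral Topology

section RealBanachAlgebra

variable {𝔸 : Type*} [NormedRing 𝔸] [NormedAlgebra ℝ 𝔸] [CompleteSpace 𝔸]

theorem exp_continuous_of_real : Continuous (exp : 𝔸 → 𝔸) :=
  continuous_iff_continuousAt.2 fun x => (exp_analytic (𝕂 := ℝ) x).continuousAt

theorem exp_add_of_commute_of_real {x y : 𝔸} (h : Commute x y) :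
    exp (x + y) = exp x * exp y :=
  letI := NormedAlgebra.restrictScalars ℚ ℝ 𝔸
  exp_add_of_commute h

theorem exp_sub_exp_eq_integral (M N : 𝔸) :
    exp M - exp N = ∫ s in (0 : ℝ)..1, exp (s • M) * (M - N) * exp ((1 - s) • N) := by
  have hderiv (s : ℝ) : HasDerivAt (fun s : ℝ => exp (s • M) * exp ((1 - s) • N))
      (exp (s • M) * (M - N) * exp ((1 - s) • N)) s := by
    have hN : HasDerivAt (fun s : ℝ => exp ((1 - s) • N)) ((-1 : ℝ) • (N * exp ((1 - s) • N))) s :=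
      (hasDerivAt_exp_smul_const' (𝕂 := ℝ) N (1 - s)).scomp s ((hasDerivAt_id s).const_sub 1)
    refine ((hasDerivAt_exp_smul_const (𝕂 := ℝ) M s).mul hN).congr_deriv ?_
    simp only [neg_one_smul, mul_neg, ← sub_eq_add_neg, mul_sub, sub_mul, mul_assoc]
  have hcont : Continuous fun s : ℝ => exp (s • M) * (M - N) * exp ((1 - s) • N) := by
    have := exp_continuous_of_real (𝔸 := 𝔸)
    fun_prop
  rw [integral_eq_sub_of_hasDerivAt (fun s _ => hderiv s) (hcont.intervalIntegrable 0 1)]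
  simp

theorem hasDerivAt_exp_add_smul (A B : 𝔸) :
    HasDerivAt (fun x : ℝ => exp (A + x • B))
      (∫ s in (0 : ℝ)..1, exp (s • A) * B * exp ((1 - s) • A)) 0 := by
  set g : ℝ → 𝔸 := fun x => ∫ s in (0 : ℝ)..1, exp (s • (A + x • B)) * B * exp ((1 - s) • A)
  have hg : Continuous g := by
    have := exp_continuous_of_real (𝔸 := 𝔸)
    exact continuous_parametric_intervalIntegral_of_continuous' (by fun_prop) 0 1
  have hslope : ∀ᶠ x in 𝓝[≠] (0 : ℝ), g x = slope (fun x : ℝ => exp (A + x • B)) 0 x := by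
    filter_upwards [self_mem_nhdsWithin] with x (hx : x ≠ 0)
    rw [slope_def_module, exp_sub_exp_eq_integral]
    simp only [sub_zero, zero_smul, add_zero, add_sub_cancel_left, mul_smul_comm, smul_mul_assoc,
      intervalIntegral.integral_smul, smul_smul, inv_mul_cancel₀ hx, one_smul, g]
  rw [hasDerivAt_iff_tendsto_slope]
  simpa [g] using ((hg.tendsto 0).mono_left nhdsWithin_le_nhds).congr' hslope

theorem integral_mul_const_of_intervalIntegrable {f : ℝ → 𝔸} {a b : ℝ}
    (hf : IntervalIntegrable f volume a b) (c : 𝔸) :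
    ∫ x in a..b, f x * c = (∫ x in a..b, f x) * c :=
  ((ContinuousLinearMap.mul ℝ 𝔸).flip c).intervalIntegral_comp_comm hf

theorem integral_const_mul_of_intervalIntegrable {f : ℝ → 𝔸} {a b : ℝ}
    (hf : IntervalIntegrable f volume a b) (c : 𝔸) :
    ∫ x in a..b, c * f x = c * ∫ x in a..b, f x :=
  (ContinuousLinearMap.mul ℝ 𝔸 c).intervalIntegral_comp_comm hf

def expConjAverage (A X : 𝔸) : 𝔸 :=
  ∫ s in (0 : ℝ)..1, exp (s • A) * X * exp (-(s • A))

theorem continuous_exp_smul_mul_exp_neg_smul (A X : 𝔸) :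
    Continuous fun s : ℝ => exp (s • A) * X * exp (-(s • A)) := by
  have := exp_continuous_of_real (𝔸 := 𝔸)
  fun_prop

theorem integral_exp_smul_mul_exp_one_sub_smul_eq_expConjAverage_mul (A B : 𝔸) :
    ∫ s in (0 : ℝ)..1, exp (s • A) * B * exp ((1 - s) • A) = expConjAverage A B * exp A := by
  have hsplit (s : ℝ) : exp ((1 - s) • A) = exp (-(s • A)) * exp A := by
    rw [← exp_add_of_commute_of_real ((Commute.refl A).smul_left s).neg_left, sub_smul, one_smul,
      neg_add_eq_sub]
  simp only [hsplit, ← mul_assoc]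
  exact integral_mul_const_of_intervalIntegrable
    ((continuous_exp_smul_mul_exp_neg_smul A B).intervalIntegrable 0 1) _

theorem integral_exp_smul_mul_exp_one_sub_smul_eq_mul_expConjAverage (A B : 𝔸) :
    ∫ s in (0 : ℝ)..1, exp (s • A) * B * exp ((1 - s) • A) = exp A * expConjAverage (-A) B := by
  have hsplit (s : ℝ) : exp ((1 - s) • A) = exp A * exp (s • -A) := by
    rw [← exp_add_of_commute_of_real ((Commute.refl A).neg_right.smul_right s), smul_neg,
      sub_smul, one_smul, sub_eq_add_neg]
  have hreflect := intervalIntegral.integral_comp_sub_left (a := 0) (b := 1)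
    (fun s : ℝ => exp (s • A) * B * exp ((1 - s) • A)) 1
  rw [sub_zero, sub_self] at hreflect
  rw [← hreflect, expConjAverage, ← integral_const_mul_of_intervalIntegrable
    ((continuous_exp_smul_mul_exp_neg_smul (-A) B).intervalIntegrable 0 1)]
  simp only [hsplit, sub_sub_cancel, smul_neg, neg_neg, mul_assoc]

end RealBanachAlgebra

section ComplexBanachAlgebra

open Complex

variable {𝔸 : Type*} [NormedRing 𝔸] [NormedAlgebra ℂ 𝔸] [CompleteSpace 𝔸]

theorem hasDerivAt_exp_smul_add_ofReal_smul (z : ℂ) (H K : 𝔸) :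
    HasDerivAt (fun x : ℝ => exp (z • (H + (x : ℂ) • K)))
      (z • ∫ s in (0 : ℝ)..1, exp (s • z • H) * K * exp ((1 - s) • z • H)) 0 := by
  have hlin (x : ℝ) : z • (H + (x : ℂ) • K) = z • H + x • z • K := by
    rw [smul_add, Complex.coe_smul, smul_comm]
  simp only [hlin, ← intervalIntegral.integral_smul]
  simpa only [smul_mul_assoc, mul_smul_comm] using hasDerivAt_exp_add_smul (z • H) (z • K)

theorem hasDerivAt_exp_conj (H K ρ₀ : 𝔸) :
    HasDerivAt (fun x : ℝ => exp ((-I) • (H + (x : ℂ) • K)) * ρ₀ * exp (I • (H + (x : ℂ) • K)))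
      (I • (exp ((-I) • H) * ρ₀ * exp (I • H) * expConjAverage ((-I) • H) K -
        expConjAverage ((-I) • H) K * (exp ((-I) • H) * ρ₀ * exp (I • H)))) 0 := by
  have hU := hasDerivAt_exp_smul_add_ofReal_smul (-I) H K
  have hV := hasDerivAt_exp_smul_add_ofReal_smul I H K
  rw [integral_exp_smul_mul_exp_one_sub_smul_eq_expConjAverage_mul] at hU
  rw [integral_exp_smul_mul_exp_one_sub_smul_eq_mul_expConjAverage, ← neg_smul] at hV
  refine ((hU.mul_const ρ₀).mul hV).congr_deriv ?_
  simp only [ofReal_zero, zero_smul, add_zero, smul_mul_assoc, mul_smul_comm, neg_smul, neg_mul,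
    smul_sub, mul_assoc]
  abel

end ComplexBanachAlgebra

section QuantumEvolutionMachine

variable {d J : ℕ} (H : ℕ → Mat d) (φ : ℕ → ℝ)

theorem qemHam_update {j : ℕ} (hj : j ∈ Finset.Icc 1 J) (x : ℝ) :
    qemHam H J (Function.update φ j x) = qemHam H J φ + ((x - φ j : ℝ) : ℂ) • H j := by
  rw [← sub_eq_iff_eq_add', qemHam, qemHam, ← Finset.sum_sub_distrib,
    Finset.sum_eq_single_of_mem j hj]
  · simp [sub_smul]
  · intro k _ hk
    simp [Function.update_of_ne hk]

attribute [local instance] Matrix.linftyOpNormedRing Matrix.linftyOpNormedAlgebra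

theorem qemChan_eq_expConjAverage (X : Mat d) :
    qemChan H J φ X = expConjAverage ((-Complex.I) • qemHam H J φ) X := by
  unfold qemChan expConjAverage
  congr 1
  funext t
  simp only [neg_smul, smul_neg, ← Complex.coe_smul, smul_smul, mul_comm, neg_neg]
  -- the two sides differ only in which ring structure on `Mat d` the products use
  rfl

end QuantumEvolutionMachine

theorem deriv_qem_general {d J : ℕ}
    (H : ℕ → Mat d) (ρ₀ : Mat d)
    (φ : ℕ → ℝ) (j : ℕ) (hj1 : 1 ≤ j) (hjJ : j ≤ J) :
    HasDerivAt (fun x : ℝ => qemState H J ρ₀ (Function.update φ j x))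
      (Complex.I •
        (qemState H J ρ₀ φ * qemChan H J φ (H j) - qemChan H J φ (H j) * qemState H J ρ₀ φ))
      (φ j) := by
  let : NormedRing (Mat d) := Matrix.linftyOpNormedRing
  let : NormedAlgebra ℂ (Mat d) := Matrix.linftyOpNormedAlgebra
  have hj : j ∈ Finset.Icc 1 J := Finset.mem_Icc.2 ⟨hj1, hjJ⟩
  have h := hasDerivAt_exp_conj (qemHam H J φ) (H j) ρ₀
  rw [← sub_self (φ j)] at h
  simp only [qemState, qemHam_update H φ hj, qemChan_eq_expConjAverage]
  exact h.comp_sub_const (φ j) (φ j)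

/-- Derivative of a quantum evolution machine:
`∂_j ρ(φ) = i [ρ(φ), Ψ_φ(H_j)]`. -/
theorem deriv_qem {d J : ℕ} (hd : 1 ≤ d)
    (H : ℕ → Mat d) (hH : ∀ j, (H j).IsHermitian) (ρ₀ : Mat d)
    (φ : ℕ → ℝ) (j : ℕ) (hj1 : 1 ≤ j) (hjJ : j ≤ J) :
    HasDerivAt (fun x : ℝ => qemState H J ρ₀ (Function.update φ j x))
      (Complex.I •
        (qemState H J ρ₀ φ * qemChan H J φ (H j) - qemChan H J φ (H j) * qemState H J ρ₀ φ))
      (φ j) :=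
  deriv_qem_general H ρ₀ φ j hj1 hjJ

end
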